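/- In any (θ₁, θ₂, …, θ_k)-representation of nK₃ with θ₁ < θ₂ < ⋯ < θ_k, for any colors i, j, ℓ ∈ {1, 2, …, ⌈k/2⌉}, there do not exist two distinct triangles such that one has color ijj and the other has color iℓℓ. -/

import Mathlib

open Finset

/-- The disjoint union of `n` copies of the complete graph `K_m`,
on vertex set `Fin n × Fin m`. -/
def copiesK (n m : ℕ) : SimpleGraph (Fin n × Fin m) where
  Adj x y := x.1 = y.1 ∧ x ≠ y
  symm := ⟨fun x y h => ⟨h.1.symm, h.2.symm⟩⟩
  loopless := ⟨fun x h => h.2 rfl⟩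

/-- The complete `n`-partite graph with `m` vertices in each part,
on vertex set `Fin n × Fin m`. -/
def completeMulti (n m : ℕ) : SimpleGraph (Fin n × Fin m) where
  Adj x y := x.1 ≠ y.1
  symm := ⟨fun x y h => h.symm⟩
  loopless := ⟨fun x h => h rfl⟩

/-- `r` together with the strictly increasing thresholds `θ₁ < ⋯ < θ_k` is a
`(θ₁, …, θ_k)`-representation of `G`: for distinct `u v`, `uv` is an edge iff the
number of thresholds not exceeding `r u + r v` is odd. -/
def IsRep {V : Type*} {k : ℕ} (G : SimpleGraph V) (θ : Fin k → ℝ) (r : V → ℝ) : Prop :=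
  StrictMono θ ∧ ∀ u v : V, u ≠ v →
    (G.Adj u v ↔ Odd (Finset.univ.filter (fun i => θ i ≤ r u + r v)).card)

/-- `G` is a `k`-threshold graph. -/
def IsKThreshold {V : Type*} (G : SimpleGraph V) (k : ℕ) : Prop :=
  ∃ (θ : Fin k → ℝ) (r : V → ℝ), IsRep G θ r

/-- The threshold number `Θ(G)`: the least `k` for which `G` is a `k`-threshold graph. -/
noncomputable def thresholdNumber {V : Type*} (G : SimpleGraph V) : ℕ :=
  sInf {k | IsKThreshold G k}

/-- The 1-based color of an edge with rank sum `s`: it equals `i` exactly when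
`s ∈ [θ_{2i-1}, θ_{2i})` (1-based indexing, with `θ_{k+1} = ∞`), i.e. when the number
of thresholds not exceeding `s` equals `2i - 1`. -/
noncomputable def edgeColor {k : ℕ} (θ : Fin k → ℝ) (s : ℝ) : ℕ :=
  ((Finset.univ.filter (fun i => θ i ≤ s)).card + 1) / 2

/-- The 1-based color of a nonedge with rank sum `s`: it equals `i` exactly when
`s ∈ [θ_{2i-2}, θ_{2i-1})` (1-based indexing, with `θ₀ = -∞`), i.e. when the number
of thresholds not exceeding `s` equals `2i - 2`. -/
noncomputable def nonedgeColor {k : ℕ} (θ : Fin k → ℝ) (s : ℝ) : ℕ :=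
  (Finset.univ.filter (fun i => θ i ≤ s)).card / 2 + 1

/-- The multiset of colors on the three edges of the `t`-th triangle of `nK₃`. -/
noncomputable def triColors3 {n k : ℕ} (θ : Fin k → ℝ) (r : Fin n × Fin 3 → ℝ) (t : Fin n) :
    Multiset ℕ :=
  {edgeColor θ (r (t, 0) + r (t, 1)), edgeColor θ (r (t, 0) + r (t, 2)),
    edgeColor θ (r (t, 1) + r (t, 2))}

/-- The multiset of colors on the three nonedges of the `t`-th part of `K_{n×3}`. -/
noncomputable def partColors3 {n k : ℕ} (θ : Fin k → ℝ) (r : Fin n × Fin 3 → ℝ) (t : Fin n) :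
    Multiset ℕ :=
  {nonedgeColor θ (r (t, 0) + r (t, 1)), nonedgeColor θ (r (t, 0) + r (t, 2)),
    nonedgeColor θ (r (t, 1) + r (t, 2))}

/-!
Write `N s` for the number of thresholds `θ i ≤ s`. It is monotone in `s`, odd on the rank sums
of edges of `nK₃` and even on those of nonedges. In a triangle `abc` of color `ijj` with apex
`a`, the legs have `N (r a + r b) = N (r a + r c)`, so `N` is odd on the whole interval between
them; hence no vertex of another triangle has its rank between `r b` and `r c`. For two such
triangles the intervals spanned by the ranks of their bases are therefore disjoint, and the sum
of the two inner endpoints lies between the two base sums. Both base sums have `N = 2i - 1`, so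
`N` is odd at this sum of ranks of a nonedge, a contradiction.
-/

open scoped Interval

theorem Monotone.odd_of_mem_uIcc {α : Type*} [LinearOrder α] {f : α → ℕ} (hf : Monotone f)
    {u v w : α} (hfuw : f u = f w) (hu : Odd (f u)) (hv : v ∈ [[u, w]]) : Odd (f v) := by
  have hfv : f v ∈ [[f u, f w]] := hf.mapsTo_uIcc hv
  rw [← hfuw, Set.uIcc_self, Set.mem_singleton_iff] at hfv
  rwa [hfv]

section OrderedGroup

variable {α : Type*} [AddCommGroup α] [LinearOrder α] [IsOrderedAddMonoid α]

theorem add_mem_uIcc_add_left {a b c : α} (h : a ∈ [[b, c]]) (d : α) :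
    d + a ∈ [[d + b, d + c]] :=
  Set.image_const_add_uIcc d b c ▸ Set.mem_image_of_mem _ h

/-- Of two disjoint intervals `[[b, c]]` and `[[y, z]]`, the inner endpoints sum to a value
between `b + c` and `y + z`. -/
theorem exists_add_mem_uIcc_add {b c y z : α} (hy : y ∉ [[b, c]]) (hz : z ∉ [[b, c]])
    (hb : b ∉ [[y, z]]) (hc : c ∉ [[y, z]]) :
    ∃ p ∈ ({b, c} : Set α), ∃ q ∈ ({y, z} : Set α), p + q ∈ [[b + c, y + z]] := by
  wlog hbc : b ≤ c generalizing b c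
  · obtain ⟨p, hp, q, hq, hpq⟩ := this (Set.uIcc_comm b c ▸ hy) (Set.uIcc_comm b c ▸ hz) hc hb
      (le_of_not_ge hbc)
    exact ⟨p, Set.pair_comm b c ▸ hp, q, hq, add_comm b c ▸ hpq⟩
  wlog hyz : y ≤ z generalizing y z
  · obtain ⟨p, hp, q, hq, hpq⟩ := this hz hy (Set.uIcc_comm y z ▸ hb) (Set.uIcc_comm y z ▸ hc)
      (le_of_not_ge hyz)
    exact ⟨p, hp, q, Set.pair_comm y z ▸ hq, add_comm y z ▸ hpq⟩
  rw [Set.uIcc_of_le hbc, Set.mem_Icc, not_and_or, not_le, not_le] at hy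
  rw [Set.uIcc_of_le hyz, Set.mem_Icc, not_and_or, not_le, not_le] at hb
  rcases lt_or_ge c y with hcy | hyc
  · refine ⟨c, by simp, y, by simp, Set.mem_uIcc.mpr (Or.inl ⟨?_, ?_⟩)⟩
    · rw [add_comm b c]; gcongr; exact hbc.trans hcy.le
    · rw [add_comm y z]; gcongr; exact hcy.le.trans hyz
  · have hzb : z < b := hb.resolve_left (hy.resolve_right hyc.not_gt).not_gt
    refine ⟨b, by simp, z, by simp, Set.mem_uIcc.mpr (Or.inr ⟨?_, ?_⟩)⟩
    · gcongr; exact hyz.trans hzb.le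
    · gcongr; exact hzb.le.trans hbc

theorem exists_odd_cross_sum {f : α → ℕ} (hf : Monotone f) {a b c x y z : α}
    (hbase : f (b + c) = f (y + z)) (hbase_odd : Odd (f (b + c)))
    (hleg₁ : f (a + b) = f (a + c)) (hleg₁_odd : Odd (f (a + b)))
    (hleg₂ : f (x + y) = f (x + z)) (hleg₂_odd : Odd (f (x + y))) :
    ∃ p ∈ ({a, b, c} : Set α), ∃ q ∈ ({x, y, z} : Set α), Odd (f (p + q)) := by
  by_cases hy : y ∈ [[b, c]]
  · exact ⟨a, by simp, y, by simp, hf.odd_of_mem_uIcc hleg₁ hleg₁_odd (add_mem_uIcc_add_left hy a)⟩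
  by_cases hz : z ∈ [[b, c]]
  · exact ⟨a, by simp, z, by simp, hf.odd_of_mem_uIcc hleg₁ hleg₁_odd (add_mem_uIcc_add_left hz a)⟩
  by_cases hb : b ∈ [[y, z]]
  · refine ⟨b, by simp, x, by simp, add_comm x b ▸ ?_⟩
    exact hf.odd_of_mem_uIcc hleg₂ hleg₂_odd (add_mem_uIcc_add_left hb x)
  by_cases hc : c ∈ [[y, z]]
  · refine ⟨c, by simp, x, by simp, add_comm x c ▸ ?_⟩
    exact hf.odd_of_mem_uIcc hleg₂ hleg₂_odd (add_mem_uIcc_add_left hc x)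
  obtain ⟨p, hp, q, hq, hpq⟩ := exists_add_mem_uIcc_add hy hz hb hc
  exact ⟨p, Set.subset_insert a _ hp, q, Set.subset_insert x _ hq,
    hf.odd_of_mem_uIcc hbase hbase_odd hpq⟩

end OrderedGroup

theorem Multiset.eq_or_eq_or_eq_of_triple_eq {α : Type*} [DecidableEq α] {a b c i j : α}
    (h : ({a, b, c} : Multiset α) = {i, j, j}) :
    (a = i ∧ b = j ∧ c = j) ∨ (b = i ∧ a = j ∧ c = j) ∨ (c = i ∧ a = j ∧ b = j) := by
  have hi := congrArg (Multiset.count i) h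
  have hj := congrArg (Multiset.count j) h
  simp only [Multiset.insert_eq_cons, Multiset.count_cons, Multiset.count_singleton] at hi hj
  split_ifs at hi hj <;> first | omega | (subst_vars; tauto)

section Representation

variable {k : ℕ}

noncomputable def thresholdCount (θ : Fin k → ℝ) (s : ℝ) : ℕ := #{i | θ i ≤ s}

theorem thresholdCount_mono (θ : Fin k → ℝ) : Monotone (thresholdCount θ) :=
  fun _ _ hst => card_le_card (monotone_filter_right _ fun _ _ hi => le_trans hi hst)

theorem thresholdCount_eq_of_edgeColor_eq {θ : Fin k → ℝ} {s t : ℝ}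
    (hs : Odd (thresholdCount θ s)) (ht : Odd (thresholdCount θ t))
    (h : edgeColor θ s = edgeColor θ t) : thresholdCount θ s = thresholdCount θ t := by
  obtain ⟨m, hm⟩ := hs
  obtain ⟨m', hm'⟩ := ht
  change (thresholdCount θ s + 1) / 2 = (thresholdCount θ t + 1) / 2 at h
  omega

theorem IsRep.adj_iff_odd {V : Type*} {G : SimpleGraph V} {θ : Fin k → ℝ} {r : V → ℝ}
    (hrep : IsRep G θ r) {u v : V} (huv : u ≠ v) :
    G.Adj u v ↔ Odd (thresholdCount θ (r u + r v)) :=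
  hrep.2 u v huv

variable {n : ℕ} {θ : Fin k → ℝ} {r : Fin n × Fin 3 → ℝ}

theorem IsRep.odd_of_copiesK (hrep : IsRep (copiesK n 3) θ r) (t : Fin n) {p q : Fin 3}
    (hpq : p ≠ q) : Odd (thresholdCount θ (r (t, p) + r (t, q))) :=
  (hrep.adj_iff_odd (by simpa using hpq)).mp ⟨rfl, by simpa using hpq⟩

theorem IsRep.even_of_copiesK (hrep : IsRep (copiesK n 3) θ r) {t₁ t₂ : Fin n} (ht : t₁ ≠ t₂)
    (p q : Fin 3) : Even (thresholdCount θ (r (t₁, p) + r (t₂, q))) :=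
  Nat.not_odd_iff_even.mp fun h => ht ((hrep.adj_iff_odd (by simp [ht])).mpr h).1

theorem exists_apex_of_triColors3_eq {t : Fin n} {i j : ℕ} (h : triColors3 θ r t = {i, j, j}) :
    ∃ a b c : Fin 3, b ≠ c ∧ a ≠ b ∧ a ≠ c ∧ edgeColor θ (r (t, b) + r (t, c)) = i ∧
      edgeColor θ (r (t, a) + r (t, b)) = j ∧ edgeColor θ (r (t, a) + r (t, c)) = j := by
  rcases Multiset.eq_or_eq_or_eq_of_triple_eq h with ⟨h01, h02, h12⟩ | ⟨h02, h01, h12⟩ |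
    ⟨h12, h01, h02⟩
  · exact ⟨2, 0, 1, by decide, by decide, by decide, h01, add_comm (r (t, 0)) _ ▸ h02,
      add_comm (r (t, 1)) _ ▸ h12⟩
  · exact ⟨1, 0, 2, by decide, by decide, by decide, h02, add_comm (r (t, 0)) _ ▸ h01, h12⟩
  · exact ⟨0, 1, 2, by decide, by decide, by decide, h12, h01, h02⟩

theorem IsRep.exists_apex_of_copiesK (hrep : IsRep (copiesK n 3) θ r) {t : Fin n} {i j : ℕ}
    (h : triColors3 θ r t = {i, j, j}) :
    ∃ a b c : Fin 3, edgeColor θ (r (t, b) + r (t, c)) = i ∧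
      Odd (thresholdCount θ (r (t, b) + r (t, c))) ∧
      thresholdCount θ (r (t, a) + r (t, b)) = thresholdCount θ (r (t, a) + r (t, c)) ∧
      Odd (thresholdCount θ (r (t, a) + r (t, b))) := by
  obtain ⟨a, b, c, hbc, hab, hac, hi, hj, hj'⟩ := exists_apex_of_triColors3_eq h
  exact ⟨a, b, c, hi, hrep.odd_of_copiesK t hbc, thresholdCount_eq_of_edgeColor_eq
    (hrep.odd_of_copiesK t hab) (hrep.odd_of_copiesK t hac) (hj.trans hj'.symm),
    hrep.odd_of_copiesK t hab⟩

end Representation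

theorem stmt7_general (n k : ℕ) (θ : Fin k → ℝ) (r : Fin n × Fin 3 → ℝ)
    (hrep : IsRep (copiesK n 3) θ r) (i j l : ℕ) :
    ¬ ∃ t₁ t₂ : Fin n, t₁ ≠ t₂ ∧
        triColors3 θ r t₁ = {i, j, j} ∧ triColors3 θ r t₂ = {i, l, l} := by
  rintro ⟨t₁, t₂, ht, h₁, h₂⟩
  obtain ⟨a, b, c, hi₁, hbc, hleg₁, hleg₁_odd⟩ := hrep.exists_apex_of_copiesK h₁
  obtain ⟨x, y, z, hi₂, hyz, hleg₂, hleg₂_odd⟩ := hrep.exists_apex_of_copiesK h₂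
  have hbase := thresholdCount_eq_of_edgeColor_eq hbc hyz (hi₁.trans hi₂.symm)
  obtain ⟨p, hp, q, hq, hodd⟩ :=
    exists_odd_cross_sum (thresholdCount_mono θ) hbase hbc hleg₁ hleg₁_odd hleg₂ hleg₂_odd
  obtain ⟨u, rfl⟩ : ∃ u, r (t₁, u) = p := by rcases hp with rfl | rfl | rfl <;> exact ⟨_, rfl⟩
  obtain ⟨v, rfl⟩ : ∃ v, r (t₂, v) = q := by rcases hq with rfl | rfl | rfl <;> exact ⟨_, rfl⟩
  exact Nat.not_even_iff_odd.mpr hodd (hrep.even_of_copiesK ht u v)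

/-- In any `(θ₁, …, θ_k)`-representation of `nK₃`, for colors
`i, j, ℓ ∈ {1, …, ⌈k/2⌉}`, there do not exist two distinct triangles, one of color
`ijj` and the other of color `iℓℓ`. -/
theorem stmt7 (n k : ℕ) (θ : Fin k → ℝ) (r : Fin n × Fin 3 → ℝ)
    (hrep : IsRep (copiesK n 3) θ r) (i j l : ℕ)
    (hi1 : 1 ≤ i) (hi2 : i ≤ (k + 1) / 2)
    (hj1 : 1 ≤ j) (hj2 : j ≤ (k + 1) / 2)
    (hl1 : 1 ≤ l) (hl2 : l ≤ (k + 1) / 2) :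
    ¬ ∃ t₁ t₂ : Fin n, t₁ ≠ t₂ ∧
        triColors3 θ r t₁ = {i, j, j} ∧ triColors3 θ r t₂ = {i, l, l} :=
  stmt7_general n k θ r hrep i j l
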